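/- For every nonnegative integer r, every f ∈ ℂ^N and every t with 0 < t ≤ λ_N^{−1/2}, one has K_r(f, t) ≤ (π/2)^r · ω_r(f, t). -/

import Mathlib

open Matrix

noncomputable section

/-- Euclidean (2-)norm on `ℂ^N`. -/
def cnorm2 {N : ℕ} (f : Fin N → ℂ) : ℝ := Real.sqrt (∑ i, ‖f i‖ ^ 2)

/-- The spectral operator `Σ_j c_j u_j u_j^*`. -/
def specOp {N : ℕ} (u : Fin N → Fin N → ℂ) (c : Fin N → ℂ) : Matrix (Fin N) (Fin N) ℂ :=
  ∑ j, c j • Matrix.vecMulVec (u j) (star (u j))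

/-- The graph translation operator `T_s = Σ_j e^{i s √λ_j} u_j u_j^*`. -/
def Tmat {N : ℕ} (u : Fin N → Fin N → ℂ) (lam : Fin N → ℝ) (s : ℝ) :
    Matrix (Fin N) (Fin N) ℂ :=
  specOp u (fun j => Complex.exp (Complex.I * (s : ℂ) * (Real.sqrt (lam j) : ℂ)))

/-- The `r`-th modulus of smoothness `ω_r(f,t) = sup_{|s| ≤ t} ‖(T_s - I)^r f‖₂`. -/
def omegaMod {N : ℕ} (u : Fin N → Fin N → ℂ) (lam : Fin N → ℝ) (r : ℕ) (f : Fin N → ℂ)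
    (t : ℝ) : ℝ :=
  ⨆ s : {s : ℝ // |s| ≤ t}, cnorm2 (((Tmat u lam s.1 - 1) ^ r).mulVec f)

/-- Functional calculus power `L^x = Σ_j λ_j^x u_j u_j^*` (with `0^0 = 1`). -/
def Lpow {N : ℕ} (u : Fin N → Fin N → ℂ) (lam : Fin N → ℝ) (x : ℝ) :
    Matrix (Fin N) (Fin N) ℂ :=
  specOp u (fun j => ((lam j ^ x : ℝ) : ℂ))

/-- The `K`-functional `K_r(f,t) = inf_g ( ‖f-g‖₂ + (t/2)^r ‖L^{r/2} g‖₂ )`. -/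
def Kfun {N : ℕ} (u : Fin N → Fin N → ℂ) (lam : Fin N → ℝ) (r : ℕ) (f : Fin N → ℂ)
    (t : ℝ) : ℝ :=
  ⨅ g : Fin N → ℂ, (cnorm2 (f - g) + (t / 2) ^ r * cnorm2 ((Lpow u lam ((r : ℝ) / 2)).mulVec g))

/-! Taking `g = f` in the K-functional, it suffices to bound `(t/2)^r ‖L^{r/2} f‖` by
`(π/2)^r ‖(T_t - I)^r f‖ ≤ (π/2)^r ω_r(f, t)`. Both operators are diagonal in the eigenbasis, so
this reduces to the scalar inequality `(t/2)√λ ≤ (π/2)|e^{it√λ} - 1|` for `0 ≤ t√λ ≤ π`, which is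
Jordan's inequality `sin x ≥ 2x/π` applied to `|e^{iθ} - 1| = 2 sin(θ/2)`. -/

section Scalar

open Real

lemma mul_le_norm_exp_I_mul_sub_one {θ : ℝ} (h0 : 0 ≤ θ) (hπ : θ ≤ π) :
    2 / π * θ ≤ ‖Complex.exp (Complex.I * θ) - 1‖ := by
  have h_sin := mul_le_sin (x := θ / 2) (by linarith) (by linarith)
  rw [Complex.norm_exp_I_mul_ofReal_sub_one, norm_mul, Real.norm_two,
    Real.norm_of_nonneg (sin_nonneg_of_nonneg_of_le_pi (by linarith) (by linarith))]
  linarith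

lemma half_pow_mul_rpow_le {t x : ℝ} (ht : 0 ≤ t) (hx : 0 ≤ x) (h : t * √x ≤ π) (r : ℕ) :
    (t / 2) ^ r * x ^ ((r : ℝ) / 2)
      ≤ (π / 2) ^ r * ‖Complex.exp (Complex.I * t * √x) - 1‖ ^ r := by
  have h_rpow : x ^ ((r : ℝ) / 2) = √x ^ r := by
    rw [sqrt_eq_rpow, ← rpow_natCast, ← rpow_mul hx]
    ring_nf
  rw [h_rpow, ← mul_pow, ← mul_pow]
  refine pow_le_pow_left₀ (by positivity) ?_ r
  calc t / 2 * √x ≤ t * √x := by linarith [mul_nonneg ht (sqrt_nonneg x)]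
    _ = π / 2 * (2 / π * (t * √x)) := by field_simp
    _ ≤ π / 2 * ‖Complex.exp (Complex.I * ↑(t * √x)) - 1‖ := by
      gcongr
      exact mul_le_norm_exp_I_mul_sub_one (by positivity) h
    _ = π / 2 * ‖Complex.exp (Complex.I * t * √x) - 1‖ := by push_cast; ring_nf

lemma mul_sqrt_le_one_of_le_rpow_neg_half {t x : ℝ} (hx : 0 ≤ x) (h : t ≤ x ^ (-(1 : ℝ) / 2)) :
    t * √x ≤ 1 := by
  rcases hx.eq_or_lt with rfl | hx
  · simp
  rw [neg_div, rpow_neg hx.le, ← sqrt_eq_rpow] at h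
  calc t * √x ≤ (√x)⁻¹ * √x := by gcongr
    _ = 1 := inv_mul_cancel₀ (sqrt_pos.mpr hx).ne'

end Scalar

lemma cnorm2_nonneg {N : ℕ} (v : Fin N → ℂ) : 0 ≤ cnorm2 v := Real.sqrt_nonneg _

lemma star_dotProduct_self_eq_sum_norm_sq {n : Type*} [Fintype n] (w : n → ℂ) :
    star w ⬝ᵥ w = ((∑ i, ‖w i‖ ^ 2 : ℝ) : ℂ) := by
  simp only [dotProduct, Pi.star_apply, RCLike.star_def]
  push_cast
  exact Finset.sum_congr rfl fun i _ => by rw [mul_comm, Complex.mul_conj']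

lemma sum_norm_sq_mulVec_of_conjTranspose_mul_self {m n : Type*} [Fintype m] [Fintype n]
    [DecidableEq n] {V : Matrix m n ℂ} (hV : Vᴴ * V = 1) (z : n → ℂ) :
    ∑ i, ‖(V *ᵥ z) i‖ ^ 2 = ∑ i, ‖z i‖ ^ 2 := by
  have h : star (V *ᵥ z) ⬝ᵥ (V *ᵥ z) = star z ⬝ᵥ z := by
    rw [star_mulVec, dotProduct_mulVec, vecMul_vecMul, hV, vecMul_one]
  rw [star_dotProduct_self_eq_sum_norm_sq, star_dotProduct_self_eq_sum_norm_sq] at h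
  exact_mod_cast h

section Spectral

variable {N : ℕ} {u : Fin N → Fin N → ℂ}

def eigenMatrix (u : Fin N → Fin N → ℂ) : Matrix (Fin N) (Fin N) ℂ := (of u)ᵀ

lemma eigenMatrix_conjTranspose_mul_self
    (hu : ∀ i j, star (u i) ⬝ᵥ u j = if i = j then 1 else 0) :
    (eigenMatrix u)ᴴ * eigenMatrix u = 1 := by
  ext i j
  simp only [eigenMatrix, mul_apply, conjTranspose_apply, transpose_apply, of_apply, one_apply,
    ← hu i j, dotProduct, Pi.star_apply]

lemma eigenMatrix_mul_conjTranspose_self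
    (hu : ∀ i j, star (u i) ⬝ᵥ u j = if i = j then 1 else 0) :
    eigenMatrix u * (eigenMatrix u)ᴴ = 1 :=
  mul_eq_one_comm.mp (eigenMatrix_conjTranspose_mul_self hu)

lemma specOp_eq_conj (u : Fin N → Fin N → ℂ) (c : Fin N → ℂ) :
    specOp u c = eigenMatrix u * diagonal c * (eigenMatrix u)ᴴ := by
  ext i k
  rw [specOp, Matrix.mul_apply]
  simp only [eigenMatrix, mul_diagonal, Matrix.sum_apply, Matrix.smul_apply, vecMulVec_apply,
    conjTranspose_apply, transpose_apply, of_apply, Pi.star_apply, smul_eq_mul]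
  exact Finset.sum_congr rfl fun j _ => by ring

lemma specOp_sub (u : Fin N → Fin N → ℂ) (c d : Fin N → ℂ) :
    specOp u c - specOp u d = specOp u (c - d) := by
  simp only [specOp, Pi.sub_apply, sub_smul, Finset.sum_sub_distrib]

lemma specOp_one (hu : ∀ i j, star (u i) ⬝ᵥ u j = if i = j then 1 else 0) :
    specOp u 1 = 1 := by
  simp [specOp_eq_conj, eigenMatrix_mul_conjTranspose_self hu]

lemma specOp_mul (hu : ∀ i j, star (u i) ⬝ᵥ u j = if i = j then 1 else 0) (c d : Fin N → ℂ) :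
    specOp u c * specOp u d = specOp u (c * d) := by
  simp only [specOp_eq_conj, Matrix.mul_assoc]
  rw [← Matrix.mul_assoc (eigenMatrix u)ᴴ, eigenMatrix_conjTranspose_mul_self hu, Matrix.one_mul,
    ← Matrix.mul_assoc (diagonal c), diagonal_mul_diagonal]
  rfl

lemma specOp_pow (hu : ∀ i j, star (u i) ⬝ᵥ u j = if i = j then 1 else 0) (c : Fin N → ℂ)
    (r : ℕ) : specOp u c ^ r = specOp u (c ^ r) := by
  induction r with
  | zero => simp [specOp_one hu]
  | succ r ih => rw [pow_succ, ih, specOp_mul hu, pow_succ]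

lemma cnorm2_specOp_mulVec (hu : ∀ i j, star (u i) ⬝ᵥ u j = if i = j then 1 else 0)
    (c f : Fin N → ℂ) :
    cnorm2 (specOp u c *ᵥ f) = √(∑ j, ‖c j‖ ^ 2 * ‖((eigenMatrix u)ᴴ *ᵥ f) j‖ ^ 2) := by
  rw [cnorm2, specOp_eq_conj, ← mulVec_mulVec, ← mulVec_mulVec,
    sum_norm_sq_mulVec_of_conjTranspose_mul_self (eigenMatrix_conjTranspose_mul_self hu)]
  simp only [mulVec_diagonal, norm_mul, mul_pow]

lemma mul_cnorm2_specOp_mulVec_le (hu : ∀ i j, star (u i) ⬝ᵥ u j = if i = j then 1 else 0)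
    {a b : ℝ} (ha : 0 ≤ a) (hb : 0 ≤ b) {c d : Fin N → ℂ} (hcd : ∀ j, a * ‖c j‖ ≤ b * ‖d j‖)
    (f : Fin N → ℂ) :
    a * cnorm2 (specOp u c *ᵥ f) ≤ b * cnorm2 (specOp u d *ᵥ f) := by
  have mul_sqrt : ∀ {x : ℝ} (S : ℝ), 0 ≤ x → x * √S = √(x ^ 2 * S) := fun S hx => by
    rw [Real.sqrt_mul (sq_nonneg _), Real.sqrt_sq hx]
  rw [cnorm2_specOp_mulVec hu, cnorm2_specOp_mulVec hu, mul_sqrt _ ha, mul_sqrt _ hb,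
    Finset.mul_sum, Finset.mul_sum]
  refine Real.sqrt_le_sqrt (Finset.sum_le_sum fun j _ => ?_)
  calc a ^ 2 * (‖c j‖ ^ 2 * ‖((eigenMatrix u)ᴴ *ᵥ f) j‖ ^ 2)
      = (a * ‖c j‖) ^ 2 * ‖((eigenMatrix u)ᴴ *ᵥ f) j‖ ^ 2 := by ring
    _ ≤ (b * ‖d j‖) ^ 2 * ‖((eigenMatrix u)ᴴ *ᵥ f) j‖ ^ 2 := by
      have := hcd j
      gcongr
    _ = b ^ 2 * (‖d j‖ ^ 2 * ‖((eigenMatrix u)ᴴ *ᵥ f) j‖ ^ 2) := by ring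

variable {lam : Fin N → ℝ}

lemma Tmat_sub_one_pow (hu : ∀ i j, star (u i) ⬝ᵥ u j = if i = j then 1 else 0) (s : ℝ)
    (r : ℕ) :
    (Tmat u lam s - 1) ^ r
      = specOp u (fun j => (Complex.exp (Complex.I * s * √(lam j)) - 1) ^ r) := by
  rw [Tmat, ← specOp_one hu, specOp_sub, specOp_pow hu]
  rfl

lemma cnorm2_Tmat_sub_one_pow_mulVec_le
    (hu : ∀ i j, star (u i) ⬝ᵥ u j = if i = j then 1 else 0) (s : ℝ) (r : ℕ) (f : Fin N → ℂ) :
    cnorm2 ((Tmat u lam s - 1) ^ r *ᵥ f) ≤ 2 ^ r * cnorm2 f := by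
  have h := mul_cnorm2_specOp_mulVec_le hu zero_le_one (pow_nonneg zero_le_two r) (d := 1)
    (c := fun j => (Complex.exp (Complex.I * s * √(lam j)) - 1) ^ r) (fun j => ?_) f
  · rwa [one_mul, specOp_one hu, one_mulVec, ← Tmat_sub_one_pow hu] at h
  have h_exp : ‖Complex.exp (Complex.I * s * √(lam j))‖ = 1 := by
    simp [Complex.norm_exp]
  have h_sub : ‖Complex.exp (Complex.I * s * √(lam j)) - 1‖ ≤ 2 :=
    (norm_sub_le _ _).trans (by rw [h_exp, norm_one]; norm_num)
  simpa [norm_pow] using pow_le_pow_left₀ (norm_nonneg _) h_sub r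

lemma le_omegaMod (hu : ∀ i j, star (u i) ⬝ᵥ u j = if i = j then 1 else 0) (r : ℕ)
    (f : Fin N → ℂ) {s t : ℝ} (hs : |s| ≤ t) :
    cnorm2 ((Tmat u lam s - 1) ^ r *ᵥ f) ≤ omegaMod u lam r f t := by
  refine le_ciSup (f := fun s : {s : ℝ // |s| ≤ t} => cnorm2 ((Tmat u lam s - 1) ^ r *ᵥ f))
    ⟨2 ^ r * cnorm2 f, ?_⟩ ⟨s, hs⟩
  rintro _ ⟨s', rfl⟩
  exact cnorm2_Tmat_sub_one_pow_mulVec_le hu _ r f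

lemma Kfun_le (r : ℕ) (f : Fin N → ℂ) {t : ℝ} (ht : 0 ≤ t) (g : Fin N → ℂ) :
    Kfun u lam r f t ≤ cnorm2 (f - g) + (t / 2) ^ r * cnorm2 (Lpow u lam (r / 2) *ᵥ g) := by
  refine ciInf_le ⟨0, ?_⟩ g
  rintro _ ⟨g', rfl⟩
  have := cnorm2_nonneg (f - g')
  have := cnorm2_nonneg (Lpow u lam (r / 2) *ᵥ g')
  positivity

end Spectral

/-- For every nonnegative integer `r`, every `f ∈ ℂ^N` and every `t`
with `0 < t ≤ λ_N^{-1/2}`, `K_r(f, t) ≤ (π/2)^r · ω_r(f, t)`. -/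
theorem stmt7
    (N : ℕ) (hN : 2 ≤ N)
    (u : Fin N → Fin N → ℂ)
    (hu : ∀ i j, star (u i) ⬝ᵥ u j = if i = j then 1 else 0)
    (lam : Fin N → ℝ) (hmono : Monotone lam)
    (hlam0 : lam ⟨0, by omega⟩ = 0)
    (r : ℕ) (f : Fin N → ℂ) (t : ℝ) (ht : 0 < t)
    (htN : t ≤ lam ⟨N - 1, by omega⟩ ^ (-(1 : ℝ) / 2)) :
    Kfun u lam r f t ≤ (Real.pi / 2) ^ r * omegaMod u lam r f t := by
  have hlam_nonneg : ∀ j, 0 ≤ lam j := fun j => hlam0 ▸ hmono (Fin.le_def.2 (Nat.zero_le _))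
  have h_small : ∀ j, t * √(lam j) ≤ Real.pi := fun j =>
    calc t * √(lam j) ≤ t * √(lam ⟨N - 1, by omega⟩) := by
          gcongr
          exact hmono (Fin.le_def.2 (Nat.le_sub_one_of_lt j.isLt))
      _ ≤ 1 := mul_sqrt_le_one_of_le_rpow_neg_half (hlam_nonneg _) htN
      _ ≤ Real.pi := by linarith [Real.pi_gt_three]
  calc Kfun u lam r f t ≤ (t / 2) ^ r * cnorm2 (Lpow u lam (r / 2) *ᵥ f) := by
        simpa [cnorm2] using Kfun_le r f ht.le f
    _ ≤ (Real.pi / 2) ^ r * cnorm2 ((Tmat u lam t - 1) ^ r *ᵥ f) := by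
        rw [Tmat_sub_one_pow hu]
        refine mul_cnorm2_specOp_mulVec_le hu (by positivity) (by positivity) (fun j => ?_) f
        rw [Complex.norm_real, Real.norm_of_nonneg (Real.rpow_nonneg (hlam_nonneg j) _), norm_pow]
        exact half_pow_mul_rpow_le ht.le (hlam_nonneg j) (h_small j) r
    _ ≤ (Real.pi / 2) ^ r * omegaMod u lam r f t := by
        gcongr
        exact le_omegaMod hu r f (abs_of_pos ht).le
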